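/- Let h ∈ ℂ with h ∉ 2πi·ℚ and q := exp(h). For ℓ = 1/2 and m₀ = 0, the generic Gelfand–Tsetlin representation V^{1/2}_{0} of U_q^{tw}(so₃) is irreducible: every ℂ-linear subspace of V = ⊕_{k∈ℤ} ℂ·e_k invariant under both I₂₁ and I₃₂ is either 0 or all of V. -/

import Mathlib

/-- `q^b := exp(h·b)`. -/
noncomputable def qpow (h b : ℂ) : ℂ := Complex.exp (h * b)

/-- the q-number `[b] := (q^b − q^{−b})/(q − q^{−1})` where `q = exp h`. -/
noncomputable def qnum (h b : ℂ) : ℂ :=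
  (Complex.exp (h * b) - Complex.exp (-(h * b))) / (Complex.exp h - Complex.exp (-h))

/-- The rationalized Gelfand–Tsetlin coefficient
`a_k = [ℓ+m₀+k+1][ℓ−m₀−k]/((q^{m₀+k}+q^{−(m₀+k)})(q^{m₀+k+1}+q^{−(m₀+k+1)}))`. -/
noncomputable def gtA (h ℓ m₀ : ℂ) (k : ℤ) : ℂ :=
  qnum h (ℓ + m₀ + k + 1) * qnum h (ℓ - m₀ - k) /
    ((qpow h (m₀ + k) + qpow h (-(m₀ + k))) *
      (qpow h (m₀ + k + 1) + qpow h (-(m₀ + k + 1))))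

/-!
`I₂₁` is diagonal in the basis `e_k` with eigenvalues `i [k] = i sinh(hk)/sinh h`, which are
pairwise distinct because `sinh(ha) - sinh(hb) = 2 cosh(h(a+b)/2) sinh(h(a-b)/2)` and neither
factor vanishes for rational nonzero arguments when `h ∉ 2πi·ℚ`. Hence an `I₂₁`-invariant
subspace contains `e_k` for every `k` in the support of each of its vectors. For `ℓ = 1/2`,
`m₀ = 0` all coefficients `a_k` are nonzero (their numerators are `[k + 3/2]` and `[1/2 - k]`),
so `I₃₂ e_k = a_k e_{k+1} - e_{k-1}` lets a nonzero invariant subspace pass from `e_k` to both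
neighbours, and therefore to every basis vector.
-/

open Complex Finsupp Function

namespace Complex

theorem sinh_sub_sinh (x y : ℂ) :
    sinh x - sinh y = 2 * cosh ((x + y) / 2) * sinh ((x - y) / 2) := by
  have hx : (x + y) / 2 + (x - y) / 2 = x := by ring
  have hy : (x + y) / 2 - (x - y) / 2 = y := by ring
  calc sinh x - sinh y
      = sinh ((x + y) / 2 + (x - y) / 2) - sinh ((x + y) / 2 - (x - y) / 2) := by rw [hx, hy]
    _ = 2 * cosh ((x + y) / 2) * sinh ((x - y) / 2) := by rw [sinh_add, sinh_sub]; ring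

end Complex

theorem qnum_eq_sinh_div (h b : ℂ) : qnum h b = sinh (h * b) / sinh h := by
  rw [qnum, ← two_sinh, ← two_sinh, mul_div_mul_left _ _ two_ne_zero]

section NotRootOfUnity

variable {h : ℂ} (hh : ∀ r : ℚ, h ≠ 2 * Real.pi * I * r)
include hh

theorem sinh_mul_rat_ne_zero {r : ℚ} (hr : r ≠ 0) : sinh (h * r) ≠ 0 := by
  intro h0
  obtain ⟨k, hk⟩ := sin_eq_zero_iff.mp (show sin (h * r * I) = 0 by rw [sin_mul_I, h0, zero_mul])
  apply hh (-k / (2 * r))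
  have hr' : (r : ℂ) ≠ 0 := by exact_mod_cast hr
  push_cast
  field_simp
  linear_combination (-I) * hk + h * r * I_sq

theorem cosh_mul_rat_ne_zero (r : ℚ) : cosh (h * r) ≠ 0 := by
  rcases eq_or_ne r 0 with rfl | hr
  · simp
  intro h0
  obtain ⟨k, hk⟩ := cos_eq_zero_iff.mp (show cos (h * r * I) = 0 by rw [cos_mul_I, h0])
  apply hh (-(2 * k + 1) / (4 * r))
  have hr' : (r : ℂ) ≠ 0 := by exact_mod_cast hr
  push_cast
  field_simp
  linear_combination (-4 * I) * hk + 4 * h * r * I_sq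

theorem qnum_rat_ne_zero {r : ℚ} (hr : r ≠ 0) : qnum h r ≠ 0 := by
  rw [qnum_eq_sinh_div]
  exact div_ne_zero (sinh_mul_rat_ne_zero hh hr) (by simpa using sinh_mul_rat_ne_zero hh one_ne_zero)

theorem qnum_rat_injective : Injective fun r : ℚ => qnum h r := by
  intro a b (hab : qnum h a = qnum h b)
  have hsinh : sinh (h * a) = sinh (h * b) := by
    rwa [qnum_eq_sinh_div, qnum_eq_sinh_div,
      div_left_inj' (by simpa using sinh_mul_rat_ne_zero hh one_ne_zero)] at hab
  have hprod : cosh (h * ((a + b) / 2 : ℚ)) * sinh (h * ((a - b) / 2 : ℚ)) = 0 := by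
    have := sinh_sub_sinh (h * a) (h * b)
    rw [hsinh, sub_self, ← mul_add, ← mul_sub, mul_div_assoc, mul_div_assoc] at this
    push_cast
    linear_combination -this / 2
  by_contra hne
  exact mul_ne_zero (cosh_mul_rat_ne_zero hh _)
    (sinh_mul_rat_ne_zero hh (by intro h0; exact hne (by linarith))) hprod

theorem qpow_add_qpow_neg_ne_zero (r : ℚ) : qpow h r + qpow h (-r) ≠ 0 := by
  rw [qpow, qpow, mul_neg, ← two_cosh]
  exact mul_ne_zero two_ne_zero (cosh_mul_rat_ne_zero hh r)

end NotRootOfUnity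

theorem Int.cast_add_half_ne_zero (n : ℤ) : (n : ℚ) + 1 / 2 ≠ 0 := by
  intro h0
  have : ((2 * n + 1 : ℤ) : ℚ) = 0 := by push_cast; linarith
  have : 2 * n + 1 = 0 := by exact_mod_cast this
  omega

theorem gtA_half_zero_ne_zero {h : ℂ} (hh : ∀ r : ℚ, h ≠ 2 * Real.pi * I * r) (k : ℤ) :
    gtA h (1 / 2) 0 k ≠ 0 := by
  have e₁ : (1 / 2 + 0 + k + 1 : ℂ) = (((k + 1 : ℤ) : ℚ) + 1 / 2 : ℚ) := by push_cast; ring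
  have e₂ : (1 / 2 - 0 - k : ℂ) = (((-k : ℤ) : ℚ) + 1 / 2 : ℚ) := by push_cast; ring
  have e₃ : (0 + k + 1 : ℂ) = ((k + 1 : ℚ) : ℂ) := by push_cast; ring
  have e₄ : (0 + k : ℂ) = ((k : ℚ) : ℂ) := by push_cast; ring
  rw [gtA, e₁, e₂, e₃, e₄]
  exact div_ne_zero
    (mul_ne_zero (qnum_rat_ne_zero hh (Int.cast_add_half_ne_zero _))
      (qnum_rat_ne_zero hh (Int.cast_add_half_ne_zero _)))
    (mul_ne_zero (qpow_add_qpow_neg_ne_zero hh _) (qpow_add_qpow_neg_ne_zero hh _))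

namespace Finsupp

section Diagonal

variable {K ι : Type*} [Field K] {f : Module.End K (ι →₀ K)} {c : ι → K}

theorem apply_apply_of_diagonal (hf : ∀ i, f (single i 1) = c i • single i 1)
    (v : ι →₀ K) (i : ι) : f v i = c i * v i := by
  induction v using Finsupp.induction_linear with
  | zero => simp
  | add v w hv hw => rw [map_add, add_apply, hv, hw, add_apply, mul_add]
  | single j b =>
    rw [← smul_single_one, map_smul, hf]
    by_cases hij : j = i
    · subst hij; simp [mul_comm]
    · simp [hij]

theorem single_one_mem_of_mem_support (hf : ∀ i, f (single i 1) = c i • single i 1)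
    (hc : Injective c) {U : Submodule K (ι →₀ K)} (hU : ∀ v ∈ U, f v ∈ U)
    {v : ι →₀ K} (hv : v ∈ U) {i : ι} (hi : i ∈ v.support) : single i 1 ∈ U := by
  induction hn : v.support.card using Nat.strong_induction_on generalizing v with
  | _ n ih =>
  classical
  by_cases hj : ∃ j ∈ v.support, j ≠ i
  · obtain ⟨j, hj, hji⟩ := hj
    -- `f - c j` kills the `j`-coordinate and keeps the `i`-coordinate.
    set w := f v - c j • v
    have hw : ∀ m, w m = (c m - c j) * v m := fun m => by
      simp only [w, sub_apply, smul_apply, apply_apply_of_diagonal hf, smul_eq_mul]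
      ring
    have hsupp : w.support ⊆ v.support.erase j := fun m hm => by
      rw [mem_support_iff, hw] at hm
      exact Finset.mem_erase.mpr
        ⟨fun hmj => hm (by simp [hmj]), mem_support_iff.mpr (right_ne_zero_of_mul hm)⟩
    refine ih w.support.card ?_ (U.sub_mem (hU v hv) (U.smul_mem _ hv)) ?_ rfl
    · calc w.support.card ≤ (v.support.erase j).card := Finset.card_le_card hsupp
        _ < n := hn ▸ Finset.card_erase_lt_of_mem hj
    · rw [mem_support_iff, hw]
      exact mul_ne_zero (sub_ne_zero.mpr (hc.ne hji.symm)) (mem_support_iff.mp hi)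
  · push Not at hj
    obtain ⟨hvi, hv_eq⟩ := support_eq_singleton.mp (Finset.eq_singleton_iff_unique_mem.mpr ⟨hi, hj⟩)
    have : (v i)⁻¹ • v = single i 1 := by
      rw [hv_eq, smul_single, smul_eq_mul, single_eq_same, inv_mul_cancel₀ hvi]
    exact this ▸ U.smul_mem _ hv

end Diagonal

theorem eq_top_of_single_one_mem_of_succ_pred {R : Type*} [Semiring R] {U : Submodule R (ℤ →₀ R)}
    {k₀ : ℤ} (h₀ : single k₀ 1 ∈ U)
    (hstep : ∀ k, single k 1 ∈ U → single (k + 1) 1 ∈ U ∧ single (k - 1) 1 ∈ U) : U = ⊤ := by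
  have hall : ∀ k, single k (1 : R) ∈ U := fun k =>
    Int.inductionOn' k k₀ h₀ (fun k _ hk => (hstep k hk).1) (fun k _ hk => (hstep k hk).2)
  rw [eq_top_iff, ← Finsupp.basisSingleOne.span_eq, Submodule.span_le]
  rintro _ ⟨k, rfl⟩
  simpa using hall k

end Finsupp

theorem stmt_18 (h : ℂ) (hh : ∀ r : ℚ, h ≠ 2 * Real.pi * Complex.I * r)
    (I21 I32 : Module.End ℂ (ℤ →₀ ℂ))
    (hI21 : ∀ k : ℤ, I21 (Finsupp.single k 1) =
      (Complex.I * qnum h ((0 : ℂ) + k)) • Finsupp.single k 1)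
    (hI32 : ∀ k : ℤ, I32 (Finsupp.single k 1) =
      gtA h (1 / 2 : ℂ) (0 : ℂ) k • Finsupp.single (k + 1) 1 - Finsupp.single (k - 1) 1)
    (U : Submodule ℂ (ℤ →₀ ℂ))
    (hU21 : ∀ v ∈ U, I21 v ∈ U) (hU32 : ∀ v ∈ U, I32 v ∈ U) :
    U = ⊥ ∨ U = ⊤ := by
  have hc : Injective fun k : ℤ => I * qnum h ((0 : ℂ) + k) := fun a b hab => by
    have := mul_left_cancel₀ I_ne_zero hab
    exact Int.cast_injective (qnum_rat_injective hh (by simpa using this))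
  have hsingle {v} (hv : v ∈ U) {k} (hk : k ∈ v.support) : single k 1 ∈ U :=
    single_one_mem_of_mem_support hI21 hc hU21 hv hk
  refine or_iff_not_imp_left.mpr fun hne => ?_
  obtain ⟨v, hv, hv0⟩ := (Submodule.ne_bot_iff U).mp hne
  obtain ⟨k₀, hk₀⟩ := support_nonempty_iff.mpr hv0
  refine eq_top_of_single_one_mem_of_succ_pred (hsingle hv hk₀) fun k hk => ?_
  have hw := hU32 _ hk
  rw [hI32] at hw
  have hne : k + 1 ≠ k - 1 := by omega
  exact ⟨hsingle hw (by rw [mem_support_iff]; simpa [hne] using gtA_half_zero_ne_zero hh k),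
    hsingle hw (by simp [hne.symm])⟩
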